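/- arXiv:1611.04293 — 6 statements merged into one kernel-verified Lean document; each statement's English description precedes it below -/
import Mathlib

section
/- Let f : [0,1] → ℝ be defined by f(x) = 1/2 + (1 − 2x)·√(1/4 − (x − 1/2)²). Then the minimum value of f on [0,1] is 1/4, attained exactly at x = 1/2 + √2/4; in particular f(1/2 + √2/4) = 1/4 and f(x) ≥ 1/4 for all x ∈ [0,1]. -/
/-!
Writing `u = x - 1/2`, the curve is `1/2 - 2 u √(1/4 - u²)`. By AM–GM with `b = √(1/4 - u²)`,
`2 u b ≤ u² + b² = 1/4`, with equality exactly when `u = b`, i.e. `u = √(1/8) = √2/4`.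
-/

namespace Real

theorem two_mul_mul_sqrt_sub_sq_le {u c : ℝ} (h : u ^ 2 ≤ c) : 2 * u * √(c - u ^ 2) ≤ c := by
  have hb : √(c - u ^ 2) ^ 2 = c - u ^ 2 := sq_sqrt (sub_nonneg.mpr h)
  nlinarith [sq_nonneg (u - √(c - u ^ 2))]

theorem two_mul_mul_sqrt_sub_sq_eq_iff {u c : ℝ} (h : u ^ 2 ≤ c) :
    2 * u * √(c - u ^ 2) = c ↔ u = √(c / 2) := by
  have hb : √(c - u ^ 2) ^ 2 = c - u ^ 2 := sq_sqrt (sub_nonneg.mpr h)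
  constructor
  · intro heq
    have hub : u = √(c - u ^ 2) := by nlinarith [sq_nonneg (u - √(c - u ^ 2))]
    have hu : 0 ≤ u := hub ▸ sqrt_nonneg _
    rw [← sqrt_sq hu]
    congr 1
    nlinarith
  · intro hu
    have hc : 0 ≤ c := (sq_nonneg u).trans h
    have hu2 : u ^ 2 = c / 2 := by rw [hu, sq_sqrt (by positivity)]
    rw [show c - u ^ 2 = c / 2 by linarith, ← hu]
    nlinarith

theorem sqrt_one_eighth : √(1 / 4 / 2) = √2 / 4 := by
  rw [show (1 / 4 / 2 : ℝ) = 2 / 4 ^ 2 by norm_num, sqrt_div' _ (by norm_num), sqrt_sq (by norm_num)]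

end Real

/-- The minimum of the S-curve on `[0,1]` is `1/4`, attained exactly at `x = 1/2 + √2/4`. -/
theorem s_curve_min (f : ℝ → ℝ)
    (hf : ∀ x ∈ Set.Icc (0 : ℝ) 1,
      f x = 1 / 2 + (1 - 2 * x) * Real.sqrt (1 / 4 - (x - 1 / 2) ^ 2)) :
    f (1 / 2 + Real.sqrt 2 / 4) = 1 / 4 ∧
    (∀ x ∈ Set.Icc (0 : ℝ) 1, 1 / 4 ≤ f x) ∧
    (∀ x ∈ Set.Icc (0 : ℝ) 1, f x = 1 / 4 → x = 1 / 2 + Real.sqrt 2 / 4) := by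
  have hf' : ∀ x ∈ Set.Icc (0 : ℝ) 1,
      f x = 1 / 2 - 2 * (x - 1 / 2) * √(1 / 4 - (x - 1 / 2) ^ 2) := by
    intro x hx
    rw [hf x hx]
    ring
  have hsq : ∀ x ∈ Set.Icc (0 : ℝ) 1, (x - 1 / 2) ^ 2 ≤ 1 / 4 := by
    rintro x ⟨h0, h1⟩
    nlinarith
  have hx₀ : 1 / 2 + √2 / 4 ∈ Set.Icc (0 : ℝ) 1 := by
    have : √2 < 2 := by
      rw [Real.sqrt_lt' two_pos]
      norm_num
    constructor <;> linarith [Real.sqrt_nonneg 2]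
  refine ⟨?_, fun x hx => ?_, fun x hx hfx => ?_⟩
  · have heq := (Real.two_mul_mul_sqrt_sub_sq_eq_iff (hsq _ hx₀)).2
      (by rw [add_sub_cancel_left, Real.sqrt_one_eighth])
    rw [hf' _ hx₀, heq]
    norm_num
  · rw [hf' x hx]
    linarith [Real.two_mul_mul_sqrt_sub_sq_le (hsq x hx)]
  · rw [hf' x hx] at hfx
    have hu := (Real.two_mul_mul_sqrt_sub_sq_eq_iff (hsq x hx)).1 (by linarith)
    rw [Real.sqrt_one_eighth] at hu
    linarith
end

section
/- Let f : [0,1] → ℝ be defined by f(x) = 1/2 + (1 − 2x)·√(1/4 − (x − 1/2)²). Then the range of f on [0,1] is exactly the interval [1/4, 3/4]. -/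
/-!
Writing `a = 1/2 - x`, the S-curve is `1/2 + 2a√(1/4 - a²)`. By AM-GM,
`|2a√(1/4 - a²)| ≤ a² + (1/4 - a²) = 1/4`, with equality exactly when `a² = 1/8`; the two
equality points `x = 1/2 ∓ √(1/8)` lie in `[0,1]`, and the intermediate value theorem between
them gives every value in `[1/4, 3/4]`.
-/

open Real Set

lemma abs_two_mul_mul_sqrt_sub_sq_le {c : ℝ} (hc : 0 ≤ c) (a : ℝ) :
    |2 * a * √(c - a ^ 2)| ≤ c := by
  rcases le_or_gt (a ^ 2) c with hac | hca
  · have hs : √(c - a ^ 2) ^ 2 = c - a ^ 2 := sq_sqrt (by linarith)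
    calc |2 * a * √(c - a ^ 2)| = 2 * |a| * √(c - a ^ 2) := by
          rw [abs_mul, abs_mul, abs_two, abs_of_nonneg (sqrt_nonneg _)]
      _ ≤ |a| ^ 2 + √(c - a ^ 2) ^ 2 := two_mul_le_add_sq _ _
      _ = c := by rw [sq_abs, hs]; ring
  · rw [sqrt_eq_zero'.mpr (by linarith)]
    simpa using hc

lemma two_mul_sqrt_half_mul_sqrt_sub_sq {c : ℝ} (hc : 0 ≤ c) :
    2 * √(c / 2) * √(c - √(c / 2) ^ 2) = c := by
  rw [sq_sqrt (by linarith), show c - c / 2 = c / 2 by ring, mul_assoc,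
    mul_self_sqrt (by linarith)]
  ring

noncomputable def sCurve (x : ℝ) : ℝ :=
  1 / 2 + (1 - 2 * x) * √(1 / 4 - (x - 1 / 2) ^ 2)

lemma sCurve_eq (x : ℝ) :
    sCurve x = 1 / 2 + 2 * (1 / 2 - x) * √(1 / 4 - (1 / 2 - x) ^ 2) := by
  rw [sCurve, show (x - 1 / 2) ^ 2 = (1 / 2 - x) ^ 2 by ring]
  ring

lemma continuous_sCurve : Continuous sCurve := by
  unfold sCurve
  fun_prop

lemma sCurve_mem_Icc (x : ℝ) : sCurve x ∈ Icc (1 / 4 : ℝ) (3 / 4) := by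
  have h := abs_le.mp (abs_two_mul_mul_sqrt_sub_sq_le (c := 1 / 4) (by norm_num) (1 / 2 - x))
  rw [sCurve_eq]
  constructor <;> linarith [h.1, h.2]

lemma sCurve_one_half_sub_sqrt : sCurve (1 / 2 - √(1 / 8)) = 3 / 4 := by
  have h := two_mul_sqrt_half_mul_sqrt_sub_sq (c := 1 / 4) (by norm_num)
  rw [sCurve_eq, sub_sub_cancel]
  norm_num at h ⊢
  linarith

lemma sCurve_one_half_add_sqrt : sCurve (1 / 2 + √(1 / 8)) = 1 / 4 := by
  have h := two_mul_sqrt_half_mul_sqrt_sub_sq (c := 1 / 4) (by norm_num)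
  rw [sCurve_eq, sub_add_cancel_left, neg_sq]
  norm_num at h ⊢
  linarith

lemma sqrt_one_eighth_le_one_half : √(1 / 8 : ℝ) ≤ 1 / 2 :=
  sqrt_le_iff.mpr ⟨by norm_num, by norm_num⟩

lemma sCurve_image_Icc : sCurve '' Icc 0 1 = Icc (1 / 4 : ℝ) (3 / 4) := by
  refine Subset.antisymm (image_subset_iff.mpr fun x _ => sCurve_mem_Icc x) ?_
  have hr0 : 0 ≤ √(1 / 8 : ℝ) := sqrt_nonneg _
  have hr := sqrt_one_eighth_le_one_half
  have hivt := intermediate_value_Icc' (by linarith : 1 / 2 - √(1 / 8) ≤ 1 / 2 + √(1 / 8))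
    continuous_sCurve.continuousOn
  rw [sCurve_one_half_sub_sqrt, sCurve_one_half_add_sqrt] at hivt
  exact hivt.trans (image_mono (Icc_subset_Icc (by linarith) (by linarith)))

/-- The range of the S-curve on `[0,1]` is exactly the interval `[1/4, 3/4]`. -/
theorem s_curve_range (f : ℝ → ℝ)
    (hf : ∀ x ∈ Set.Icc (0 : ℝ) 1,
      f x = 1 / 2 + (1 - 2 * x) * Real.sqrt (1 / 4 - (x - 1 / 2) ^ 2)) :
    f '' Set.Icc (0 : ℝ) 1 = Set.Icc (1 / 4 : ℝ) (3 / 4) := by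
  rw [← sCurve_image_Icc]
  exact EqOn.image_eq hf
end

section
/- Let f : [0,1] → ℝ be defined by f(x) = 1/2 + (1 − 2x)·√(1/4 − (x − 1/2)²). Then f is strictly monotonically increasing on the interval [0, 1/2 − √2/4]. -/
/-!
With `s = (x - 1/2)²` and `x ≤ 1/2` we have `1 - 2x = 2√s`, so the curve is `1/2 + 2√(s (1/4 - s))`.
The parabola `s (1/4 - s)` peaks at `s = 1/8`, i.e. at `x = 1/2 - √2/4`; to the left of that point
`s` decreases from `1/4` to `1/8`, so `s (1/4 - s)`, and with it the curve, strictly increases.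
-/

open Real Set

theorem strictAntiOn_mul_sub_self (c : ℝ) : StrictAntiOn (fun s : ℝ => s * (c - s)) (Ici (c / 2)) := by
  intro s hs t ht hst
  simp only [mem_Ici] at hs ht
  nlinarith

theorem strictAntiOn_sub_sq (a : ℝ) : StrictAntiOn (fun x : ℝ => (x - a) ^ 2) (Iic a) := by
  intro x hx y hy hxy
  simp only [mem_Iic] at hx hy
  nlinarith

theorem one_sub_two_mul_mul_sqrt {x : ℝ} (hx : x ≤ 1 / 2) :
    (1 - 2 * x) * √(1 / 4 - (x - 1 / 2) ^ 2) = 2 * √((x - 1 / 2) ^ 2 * (1 / 4 - (x - 1 / 2) ^ 2)) := by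
  rw [sqrt_mul (sq_nonneg _), sqrt_sq_eq_abs, abs_of_nonpos (by linarith)]
  ring

theorem one_eighth_le_sq_sub_half {x : ℝ} (hx : x ≤ 1 / 2 - √2 / 4) : 1 / 8 ≤ (x - 1 / 2) ^ 2 := by
  have h2 : √2 ^ 2 = 2 := sq_sqrt zero_le_two
  nlinarith [sqrt_nonneg 2]

/-- The S-curve is strictly increasing on `[0, 1/2 − √2/4]`. -/
theorem s_curve_strictMonoOn_left (f : ℝ → ℝ)
    (hf : ∀ x ∈ Set.Icc (0 : ℝ) 1,
      f x = 1 / 2 + (1 - 2 * x) * Real.sqrt (1 / 4 - (x - 1 / 2) ^ 2)) :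
    StrictMonoOn f (Set.Icc (0 : ℝ) (1 / 2 - Real.sqrt 2 / 4)) := by
  set I := Icc (0 : ℝ) (1 / 2 - √2 / 4)
  have hI : ∀ x ∈ I, x ≤ 1 / 2 := fun x hx => by linarith [hx.2, sqrt_nonneg 2]
  have hcurve : EqOn (fun x => 1 / 2 + 2 * √((x - 1 / 2) ^ 2 * (1 / 4 - (x - 1 / 2) ^ 2))) f I :=
    fun x hx => by
      rw [hf x ⟨hx.1, by linarith [hI x hx]⟩, one_sub_two_mul_mul_sqrt (hI x hx)]
  have hsq : StrictAntiOn (fun x : ℝ => (x - 1 / 2) ^ 2) I := (strictAntiOn_sub_sq _).mono hI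
  have hprod : StrictMonoOn (fun x : ℝ => (x - 1 / 2) ^ 2 * (1 / 4 - (x - 1 / 2) ^ 2)) I :=
    (strictAntiOn_mul_sub_self (1 / 4)).comp hsq fun x hx =>
      mem_Ici.2 <| by linarith [one_eighth_le_sq_sub_half hx.2]
  refine StrictMonoOn.congr (fun x hx y hy hxy => ?_) hcurve
  have hx_nonneg : 0 ≤ (x - 1 / 2) ^ 2 * (1 / 4 - (x - 1 / 2) ^ 2) :=
    mul_nonneg (sq_nonneg _) (by nlinarith [hx.1, hI x hx])
  have hsqrt := sqrt_lt_sqrt hx_nonneg (hprod hx hy hxy)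
  linarith
end

section
/- Let f : [0,1] → ℝ be defined by f(x) = 1/2 + (1 − 2x)·√(1/4 − (x − 1/2)²). Then f is strictly monotonically decreasing on the interval [1/2 − √2/4, 1/2 + √2/4]. -/
/-!
In the variable `t = x - 1/2` the curve is `1/2 - 2 t √(1/4 - t²)`, and `t ↦ t √(2a² - t²)` has
derivative `(2a² - 2t²) / √(2a² - t²)`, which is positive for `|t| < a`; here `a = √2/4`.
-/

open Real Set

theorem hasDerivAt_mul_sqrt_sub_sq {c t : ℝ} (ht : t ^ 2 < c) :
    HasDerivAt (fun t => t * √(c - t ^ 2)) ((c - 2 * t ^ 2) / √(c - t ^ 2)) t := by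
  have hpos : 0 < c - t ^ 2 := by linarith
  have hinner : HasDerivAt (fun t => c - t ^ 2) (-(2 * t)) t := by
    simpa using (hasDerivAt_pow 2 t).const_sub c
  refine ((hasDerivAt_id' t).fun_mul (hinner.sqrt hpos.ne')).congr_deriv ?_
  have hs : √(c - t ^ 2) ≠ 0 := (sqrt_pos.2 hpos).ne'
  field_simp
  rw [sq_sqrt hpos.le]
  ring

theorem strictMonoOn_mul_sqrt_two_mul_sq_sub_sq (a : ℝ) :
    StrictMonoOn (fun t => t * √(2 * a ^ 2 - t ^ 2)) (Icc (-a) a) := by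
  refine strictMonoOn_of_deriv_pos (convex_Icc _ _) (by fun_prop) fun t ht => ?_
  rw [interior_Icc] at ht
  have hta : t ^ 2 < a ^ 2 := sq_lt_sq' ht.1 ht.2
  rw [(hasDerivAt_mul_sqrt_sub_sq (by nlinarith)).deriv]
  exact div_pos (by linarith) (sqrt_pos.2 (by nlinarith))

/-- The S-curve is strictly decreasing on `[1/2 − √2/4, 1/2 + √2/4]`. -/
theorem s_curve_strictAntiOn_middle (f : ℝ → ℝ)
    (hf : ∀ x ∈ Set.Icc (0 : ℝ) 1,
      f x = 1 / 2 + (1 - 2 * x) * Real.sqrt (1 / 4 - (x - 1 / 2) ^ 2)) :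
    StrictAntiOn f (Set.Icc (1 / 2 - Real.sqrt 2 / 4) (1 / 2 + Real.sqrt 2 / 4)) := by
  have ha : 2 * (√2 / 4) ^ 2 = 1 / 4 := by
    rw [div_pow, sq_sqrt zero_le_two]
    norm_num
  generalize √2 / 4 = a at ha ⊢
  have hf_shift : ∀ x ∈ Icc (1 / 2 - a) (1 / 2 + a),
      f x = 1 / 2 - 2 * ((x - 1 / 2) * √(2 * a ^ 2 - (x - 1 / 2) ^ 2)) := by
    rintro x ⟨hx₁, hx₂⟩
    have ha_le : a ≤ 1 / 2 := by nlinarith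
    rw [hf x ⟨by linarith, by linarith⟩, ha]
    ring
  have hmem_shift : ∀ x ∈ Icc (1 / 2 - a) (1 / 2 + a), x - 1 / 2 ∈ Icc (-a) a :=
    fun x ⟨hx₁, hx₂⟩ => ⟨by linarith, by linarith⟩
  intro x hx y hy hxy
  have hlt := strictMonoOn_mul_sqrt_two_mul_sq_sub_sq a (hmem_shift x hx) (hmem_shift y hy)
    (by linarith)
  rw [hf_shift x hx, hf_shift y hy]
  linarith
end

section
/- Let f : [0,1] → ℝ be defined by f(x) = 1/2 + (1 − 2x)·√(1/4 − (x − 1/2)²). Then f is strictly monotonically increasing on the interval [1/2 + √2/4, 1]. -/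
/-!
Writing `t = x - 1/2`, the curve is `f x = 1/2 - 2 t √(1/4 - t²)`, so it suffices that
`t ↦ t √(c - t²)` decreases for `c/2 ≤ t² ≤ c`. For `t ≥ 0` this is `√(t² (c - t²))`, and
`t² (c - t²) = c²/4 - (t² - c/2)²` decreases once `t²` passes `c/2`.
-/

open Real

theorem mul_sqrt_sub_sq_lt_mul_sqrt_sub_sq {c s t : ℝ} (hs₀ : 0 ≤ s) (hs : c / 2 ≤ s ^ 2)
    (hst : s < t) (ht : t ^ 2 ≤ c) : t * √(c - t ^ 2) < s * √(c - s ^ 2) := by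
  have hsq : s ^ 2 < t ^ 2 := pow_lt_pow_left₀ hst hs₀ two_ne_zero
  have mul_sqrt_eq : ∀ u : ℝ, 0 ≤ u → u * √(c - u ^ 2) = √(u ^ 2 * (c - u ^ 2)) := fun u hu => by
    rw [sqrt_mul (sq_nonneg u), sqrt_sq hu]
  rw [mul_sqrt_eq t (hs₀.trans hst.le), mul_sqrt_eq s hs₀]
  apply sqrt_lt_sqrt (mul_nonneg (sq_nonneg t) (sub_nonneg.mpr ht))
  linear_combination mul_pos (sub_pos.mpr hsq) (by linarith : 0 < t ^ 2 + s ^ 2 - c)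

theorem strictAntiOn_mul_sqrt_sub_sq (c : ℝ) :
    StrictAntiOn (fun t => t * √(c - t ^ 2)) (Set.Icc √(c / 2) √c) := by
  rintro s ⟨hs, -⟩ t ⟨-, ht⟩ hst
  have hs₀ : 0 ≤ s := (sqrt_nonneg _).trans hs
  exact mul_sqrt_sub_sq_lt_mul_sqrt_sub_sq hs₀ ((sqrt_le_left hs₀).mp hs) hst
    ((le_sqrt' (hs₀.trans_lt hst)).mp ht)

/-- The S-curve is strictly increasing on `[1/2 + √2/4, 1]`. -/
theorem s_curve_strictMonoOn_right (f : ℝ → ℝ)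
    (hf : ∀ x ∈ Set.Icc (0 : ℝ) 1,
      f x = 1 / 2 + (1 - 2 * x) * Real.sqrt (1 / 4 - (x - 1 / 2) ^ 2)) :
    StrictMonoOn f (Set.Icc (1 / 2 + Real.sqrt 2 / 4) (1 : ℝ)) := by
  have hlow : √(1 / 4 / 2) = √2 / 4 := by
    rw [show (1 / 4 / 2 : ℝ) = (√2 / 4) ^ 2 by rw [div_pow, sq_sqrt zero_le_two]; norm_num]
    exact sqrt_sq (by positivity)
  have hup : √(1 / 4) = 1 / 2 := by
    rw [show (1 / 4 : ℝ) = (1 / 2) ^ 2 by norm_num]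
    exact sqrt_sq (by norm_num)
  have hdecr := strictAntiOn_mul_sqrt_sub_sq (1 / 4)
  rw [hlow, hup] at hdecr
  have hs₀ : 0 ≤ √2 := sqrt_nonneg 2
  rintro x ⟨hx₀, hx₁⟩ y ⟨hy₀, hy₁⟩ hxy
  have hlt := hdecr (a := x - 1 / 2) (b := y - 1 / 2) ⟨by linarith, by linarith⟩
    ⟨by linarith, by linarith⟩ (by linarith)
  rw [hf x ⟨by linarith, hx₁⟩, hf y ⟨by linarith, hy₁⟩]
  linear_combination 2 * hlt
end

section
/- Let f : [0,1] → ℝ be defined by f(x) = 1/2 + (1 − 2x)·√(1/4 − (x − 1/2)²), and let y₁(x) = 1/2 − √(1/4 − (x − 1/2)²) denote the lower semicircle of the circle (x − 1/2)² + (y − 1/2)² = 1/4. Then ∫₀¹ (f(x) − y₁(x)) dx = π/8; that is, the S-curve divides the disk of radius 1/2 (total area π/4) into a Yang region and a Yin region of equal area π/8 each. -/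
/-!
Pointwise, `f - y₁ = (1 - 2x)·√(1/4 - (x - 1/2)²) + √(1/4 - (x - 1/2)²)`. The first summand is
antisymmetric under the reflection `x ↦ 1 - x` and so integrates to `0`; the second is the height
of the upper half of the disk above its centre line, whose integral is half the disk area, `π/8`.
-/

open intervalIntegral Real

theorem intervalIntegral.integral_eq_zero_of_comp_add_sub_eq_neg {E : Type*}
    [NormedAddCommGroup E] [NormedSpace ℝ E] {f : ℝ → E} {a b : ℝ}
    (hf : ∀ x, f (a + b - x) = -f x) :
    ∫ x in a..b, f x = 0 := by
  have h : ∫ x in a..b, f x = -∫ x in a..b, f x := by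
    calc ∫ x in a..b, f x = ∫ x in a..b, f (a + b - x) := by
          rw [integral_comp_sub_left]; simp
      _ = -∫ x in a..b, f x := by simp only [hf, integral_neg]
  have h_two : (2 : ℝ) • ∫ x in a..b, f x = 0 := by
    rw [two_smul]; nth_rewrite 2 [h]; exact add_neg_cancel _
  exact (smul_eq_zero.mp h_two).resolve_left two_ne_zero

theorem integral_sqrt_sq_sub_sq (c : ℝ) {r : ℝ} (hr : 0 ≤ r) :
    ∫ x in (c - r)..(c + r), √(r ^ 2 - (x - c) ^ 2) = π * r ^ 2 / 2 := by
  rcases hr.eq_or_lt with rfl | hr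
  · simp
  have h_scale : ∀ t : ℝ, √(r ^ 2 - (r * t + c - c) ^ 2) = r * √(1 - t ^ 2) := by
    intro t
    rw [show r ^ 2 - (r * t + c - c) ^ 2 = r ^ 2 * (1 - t ^ 2) by ring,
      sqrt_mul (sq_nonneg r), sqrt_sq hr.le]
  have h_subst := integral_comp_mul_add (fun x => √(r ^ 2 - (x - c) ^ 2)) hr.ne' c
    (a := -1) (b := 1)
  simp only [h_scale, integral_const_mul, integral_sqrt_one_sub_sq, smul_eq_mul] at h_subst
  rw [show r * -1 + c = c - r by ring, show r * 1 + c = c + r by ring] at h_subst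
  field_simp at h_subst ⊢
  linarith

/-- The Yang region (between the lower semicircle `y₁` and the S-curve `f`)
has area `π/8`, i.e. exactly half of the disk's area `π/4`. -/
theorem yang_region_area (f : ℝ → ℝ)
    (hf : ∀ x ∈ Set.Icc (0 : ℝ) 1,
      f x = 1 / 2 + (1 - 2 * x) * Real.sqrt (1 / 4 - (x - 1 / 2) ^ 2)) :
    ∫ x in (0 : ℝ)..1, (f x - (1 / 2 - Real.sqrt (1 / 4 - (x - 1 / 2) ^ 2))) = π / 8 := by
  set y : ℝ → ℝ := fun x => √(1 / 4 - (x - 1 / 2) ^ 2)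
  have h_split : Set.EqOn (fun x => f x - (1 / 2 - √(1 / 4 - (x - 1 / 2) ^ 2)))
      (fun x => (1 - 2 * x) * y x + y x) (Set.uIcc 0 1) := by
    intro x hx
    rw [Set.uIcc_of_le zero_le_one] at hx
    simp only [y, hf x hx]
    ring
  have hy : Continuous y := by fun_prop
  have hy_odd : Continuous fun x => (1 - 2 * x) * y x := by fun_prop
  have h_odd : ∫ x in (0 : ℝ)..1, (1 - 2 * x) * y x = 0 :=
    integral_eq_zero_of_comp_add_sub_eq_neg fun x => by
      simp only [y, show 0 + 1 - x - 1 / 2 = -(x - 1 / 2) by ring, neg_sq]; ring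
  have h_disk : ∫ x in (0 : ℝ)..1, y x = π / 8 := by
    have := integral_sqrt_sq_sub_sq (1 / 2) (r := 1 / 2) (by norm_num)
    norm_num at this
    linarith
  rw [integral_congr h_split,
    integral_add (hy_odd.intervalIntegrable 0 1) (hy.intervalIntegrable 0 1), h_odd, h_disk,
    zero_add]
end
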